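/- For m = 1, 2, 3 let β_m, θ_m ∈ ℝᵖ and W_m be deterministic real n×p matrices, and let ε₁, ε₂, ε₃ : Ω → ℝⁿ be square-integrable random vectors with E[ε_m] = 0 and E[ε_m ε_{m'}ᵀ] = Σ_{mm'} for m, m' ∈ {1,2,3}. Set y_m = X_m β_m + W_m θ_m + ε_m, y = y₁ + y₂, ŷ = H y, ŷ* = H₁ y₁ + H₂ y₂, ŷ₃ = H₃ y₃, and R := (y₃ − ŷ₃)ᵀ(ŷ* − ŷ). Then E[R] = Tr{(I − H₃)(H₁ − H)Σ₁₃} + Tr{(I − H₃)(H₂ − H)Σ₂₃} + (W₃θ₃)ᵀ(I − H₃)(H₁ − H)(W₁θ₁) + (W₃θ₃)ᵀ(I − H₃)(H₂ − H)(W₂θ₂). -/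

import Mathlib

open Matrix MeasureTheory ProbabilityTheory
open scoped BigOperators

/-- The hat matrix `H_A = A (AᵀA)⁻¹ Aᵀ` of a design matrix `A`. -/
noncomputable def hatMat {n : ℕ} {q : Type*} [Fintype q] [DecidableEq q]
    (A : Matrix (Fin n) q ℝ) : Matrix (Fin n) (Fin n) ℝ :=
  A * (Aᵀ * A)⁻¹ * Aᵀ

/-!
Since `H₃ X₃ = X₃` and `H₁ X₁ = H X₁ = X₁`, `H₂ X₂ = H X₂ = X₂`, the regressors `X_m β_m` are
annihilated by `I − H₃` and by `H_m − H`, and as `I − H₃` is symmetric,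
`R = (w₃ + ε₃)ᵀ (I − H₃)(H₁ − H)(w₁ + ε₁) + (w₃ + ε₃)ᵀ (I − H₃)(H₂ − H)(w₂ + ε₂)` with
`w_m = W_m θ_m`. For a constant matrix `M` and mean-zero square-integrable `e`, `f`, one has
`E[(u + e)ᵀ M (v + f)] = uᵀ M v + Tr(M E[f eᵀ])`, which gives the formula.
-/

section HatMatrix

variable {n : ℕ} {q q' : Type*} [Fintype q] [DecidableEq q] [Fintype q'] [DecidableEq q']

theorem hatMat_mul_self {A : Matrix (Fin n) q ℝ} (h : IsUnit (Aᵀ * A)) : hatMat A * A = A := by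
  rw [hatMat, Matrix.mul_assoc, Matrix.mul_assoc,
    nonsing_inv_mul _ ((isUnit_iff_isUnit_det _).mp h), Matrix.mul_one]

theorem hatMat_isSymm (A : Matrix (Fin n) q ℝ) : (hatMat A).IsSymm := by
  rw [IsSymm, hatMat, transpose_mul, transpose_mul, transpose_transpose, transpose_nonsing_inv,
    transpose_mul, transpose_transpose, Matrix.mul_assoc]

theorem hatMat_fromCols_mul_left {A : Matrix (Fin n) q ℝ} {B : Matrix (Fin n) q' ℝ}
    (h : IsUnit ((fromCols A B)ᵀ * fromCols A B)) : hatMat (fromCols A B) * A = A :=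
  ((fromCols_ext_iff _ _ _ _).mp (by rw [← mul_fromCols]; exact hatMat_mul_self h)).1

theorem hatMat_fromCols_mul_right {A : Matrix (Fin n) q ℝ} {B : Matrix (Fin n) q' ℝ}
    (h : IsUnit ((fromCols A B)ᵀ * fromCols A B)) : hatMat (fromCols A B) * B = B :=
  ((fromCols_ext_iff _ _ _ _).mp (by rw [← mul_fromCols]; exact hatMat_mul_self h)).2

theorem one_sub_hatMat_mul_self {A : Matrix (Fin n) q ℝ} (h : IsUnit (Aᵀ * A)) :
    (1 - hatMat A) * A = 0 := by
  rw [Matrix.sub_mul, Matrix.one_mul, hatMat_mul_self h, sub_self]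

theorem hatMat_sub_hatMat_fromCols_mul_left {A : Matrix (Fin n) q ℝ} {B : Matrix (Fin n) q' ℝ}
    (hA : IsUnit (Aᵀ * A)) (h : IsUnit ((fromCols A B)ᵀ * fromCols A B)) :
    (hatMat A - hatMat (fromCols A B)) * A = 0 := by
  rw [Matrix.sub_mul, hatMat_mul_self hA, hatMat_fromCols_mul_left h, sub_self]

theorem hatMat_sub_hatMat_fromCols_mul_right {A : Matrix (Fin n) q ℝ} {B : Matrix (Fin n) q' ℝ}
    (hB : IsUnit (Bᵀ * B)) (h : IsUnit ((fromCols A B)ᵀ * fromCols A B)) :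
    (hatMat B - hatMat (fromCols A B)) * B = 0 := by
  rw [Matrix.sub_mul, hatMat_mul_self hB, hatMat_fromCols_mul_right h, sub_self]

end HatMatrix

section MatrixAlgebra

variable {R : Type*} [CommSemiring R] {m k : Type*} [Fintype m] [Fintype k]

theorem mulVec_mulVec_add_of_mul_eq_zero {M : Matrix m m R} {X : Matrix m k R} (h : M * X = 0)
    (β : k → R) (v : m → R) : M *ᵥ (X *ᵥ β + v) = M *ᵥ v := by
  rw [mulVec_add, mulVec_mulVec, h, zero_mulVec, zero_add]

theorem Matrix.IsSymm.mulVec_dotProduct {S : Matrix m m R} (hS : S.IsSymm) (a b : m → R) :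
    S *ᵥ a ⬝ᵥ b = a ⬝ᵥ S *ᵥ b := by
  rw [dotProduct_mulVec, ← mulVec_transpose, hS.eq]

theorem dotProduct_mulVec_eq_sum_sum_mul (a : m → R) (M : Matrix m k R) (b : k → R) :
    a ⬝ᵥ M *ᵥ b = ∑ j, ∑ i, M i j * (a i * b j) := by
  simp only [dot_mulVec_eq_sum_sum, mul_left_comm (a _), mul_assoc]

end MatrixAlgebra

section SecondMoments

variable {Ω : Type*} [MeasurableSpace Ω] {P : Measure Ω} {ι κ : Type*} [Fintype ι] [Fintype κ]

theorem integrable_dotProduct_mulVec {x : Ω → ι → ℝ} {y : Ω → κ → ℝ}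
    (hx : ∀ i, MemLp (fun ω => x ω i) 2 P) (hy : ∀ j, MemLp (fun ω => y ω j) 2 P)
    (M : Matrix ι κ ℝ) : Integrable (fun ω => x ω ⬝ᵥ M *ᵥ y ω) P := by
  simp_rw [dotProduct_mulVec_eq_sum_sum_mul]
  exact integrable_finsetSum _ fun j _ => integrable_finsetSum _ fun i _ =>
    ((hx i).integrable_mul (hy j)).const_mul (M i j)

theorem integral_dotProduct_mulVec {x : Ω → ι → ℝ} {y : Ω → κ → ℝ}
    (hx : ∀ i, MemLp (fun ω => x ω i) 2 P) (hy : ∀ j, MemLp (fun ω => y ω j) 2 P)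
    (M : Matrix ι κ ℝ) :
    ∫ ω, x ω ⬝ᵥ M *ᵥ y ω ∂P = ∑ j, ∑ i, M i j * ∫ ω, x ω i * y ω j ∂P := by
  have hxy : ∀ i j, Integrable (fun ω => x ω i * y ω j) P := fun i j =>
    (hx i).integrable_mul (hy j)
  simp_rw [dotProduct_mulVec_eq_sum_sum_mul]
  rw [integral_finsetSum _ fun j _ => integrable_finsetSum _ fun i _ => (hxy i j).const_mul _]
  refine Finset.sum_congr rfl fun j _ => ?_
  rw [integral_finsetSum _ fun i _ => (hxy i j).const_mul _]
  simp_rw [integral_const_mul]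

variable [IsProbabilityMeasure P]

theorem integral_const_add_mul_const_add {a b : Ω → ℝ} (ha : MemLp a 2 P) (hb : MemLp b 2 P)
    (ha₀ : ∫ ω, a ω ∂P = 0) (hb₀ : ∫ ω, b ω ∂P = 0) (c d : ℝ) :
    ∫ ω, (c + a ω) * (d + b ω) ∂P = c * d + ∫ ω, a ω * b ω ∂P := by
  have hab : Integrable (fun ω => a ω * b ω) P := ha.integrable_mul hb
  have hcb : Integrable (fun ω => c * b ω) P := (hb.integrable one_le_two).const_mul c
  have hda : Integrable (fun ω => d * a ω) P := (ha.integrable one_le_two).const_mul d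
  calc ∫ ω, (c + a ω) * (d + b ω) ∂P
      = ∫ ω, c * d + c * b ω + d * a ω + a ω * b ω ∂P := by
        congr 1 with ω; ring
    _ = c * d + c * ∫ ω, b ω ∂P + d * ∫ ω, a ω ∂P + ∫ ω, a ω * b ω ∂P := by
        rw [integral_add ?_ hab, integral_add ?_ hda, integral_add (integrable_const _) hcb,
          integral_const, probReal_univ, one_smul, integral_const_mul, integral_const_mul]
        exacts [(integrable_const _).add hcb, ((integrable_const _).add hcb).add hda]
    _ = c * d + ∫ ω, a ω * b ω ∂P := by rw [ha₀, hb₀]; ring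

theorem integral_add_dotProduct_mulVec_add {e : Ω → ι → ℝ} {f : Ω → κ → ℝ} {S : Matrix κ ι ℝ}
    (he : ∀ i, MemLp (fun ω => e ω i) 2 P) (hf : ∀ j, MemLp (fun ω => f ω j) 2 P)
    (he₀ : ∀ i, ∫ ω, e ω i ∂P = 0) (hf₀ : ∀ j, ∫ ω, f ω j ∂P = 0)
    (hS : ∀ j i, ∫ ω, f ω j * e ω i ∂P = S j i) (u : ι → ℝ) (M : Matrix ι κ ℝ) (v : κ → ℝ) :
    ∫ ω, (u + e ω) ⬝ᵥ M *ᵥ (v + f ω) ∂P = u ⬝ᵥ M *ᵥ v + trace (M * S) := by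
  rw [integral_dotProduct_mulVec (x := fun ω => u + e ω) (y := fun ω => v + f ω)
    (fun i => (memLp_const (u i)).add (he i)) (fun j => (memLp_const (v j)).add (hf j))]
  simp_rw [Pi.add_apply, integral_const_add_mul_const_add (he _) (hf _) (he₀ _) (hf₀ _),
    mul_comm (e _ _), hS, mul_add, Finset.sum_add_distrib, dotProduct_mulVec_eq_sum_sum_mul,
    trace, diag, mul_apply]
  rw [Finset.sum_comm (f := fun j i => M i j * S j i)]

end SecondMoments

/-- **Lemma 2, Eq. (proof_W3)** (conditional-on-`W` formula): with deterministic `W_m` and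
mean-zero square-integrable errors with cross-covariances `Σ_{mm'} = E[ε_m ε_{m'}ᵀ]`,
`E[R] = Tr{(I−H₃)(H₁−H)Σ₁₃} + Tr{(I−H₃)(H₂−H)Σ₂₃}
      + (W₃θ₃)ᵀ(I−H₃)(H₁−H)(W₁θ₁) + (W₃θ₃)ᵀ(I−H₃)(H₂−H)(W₂θ₂)`. -/
theorem expectation_R_deterministic_W {n p : ℕ}
    {Ω : Type*} [MeasurableSpace Ω] (P : Measure Ω) [IsProbabilityMeasure P]
    (X : Fin 3 → Matrix (Fin n) (Fin p) ℝ)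
    (hXm : ∀ m, IsUnit ((X m)ᵀ * X m))
    (hX : IsUnit ((fromCols (X 0) (X 1))ᵀ * fromCols (X 0) (X 1)))
    (β θ : Fin 3 → Fin p → ℝ)
    (W : Fin 3 → Matrix (Fin n) (Fin p) ℝ)
    (ε : Fin 3 → Ω → Fin n → ℝ)
    (Sig : Fin 3 → Fin 3 → Matrix (Fin n) (Fin n) ℝ)
    (hL2 : ∀ m i, MemLp (fun ω => ε m ω i) 2 P)
    (hmean : ∀ m i, ∫ ω, ε m ω i ∂P = 0)
    (hcov : ∀ m m' i j, ∫ ω, ε m ω i * ε m' ω j ∂P = Sig m m' i j) :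
    let y : Fin 3 → Ω → Fin n → ℝ :=
      fun m ω => (X m).mulVec (β m) + (W m).mulVec (θ m) + ε m ω
    let H := hatMat (fromCols (X 0) (X 1))
    let H₁ := hatMat (X 0)
    let H₂ := hatMat (X 1)
    let H₃ := hatMat (X 2)
    (∫ ω, (y 2 ω - H₃.mulVec (y 2 ω)) ⬝ᵥ
        ((H₁.mulVec (y 0 ω) + H₂.mulVec (y 1 ω)) - H.mulVec (y 0 ω + y 1 ω)) ∂P)
      = Matrix.trace ((1 - H₃) * (H₁ - H) * Sig 0 2)
        + Matrix.trace ((1 - H₃) * (H₂ - H) * Sig 1 2)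
        + ((W 2).mulVec (θ 2)) ⬝ᵥ (((1 - H₃) * (H₁ - H)).mulVec ((W 0).mulVec (θ 0)))
        + ((W 2).mulVec (θ 2)) ⬝ᵥ (((1 - H₃) * (H₂ - H)).mulVec ((W 1).mulVec (θ 1))) := by
  intro y H H₁ H₂ H₃
  have hy m ω : y m ω = X m *ᵥ β m + (W m *ᵥ θ m + ε m ω) := add_assoc _ _ _
  have hR ω : (y 2 ω - H₃ *ᵥ y 2 ω) ⬝ᵥ (H₁ *ᵥ y 0 ω + H₂ *ᵥ y 1 ω - H *ᵥ (y 0 ω + y 1 ω))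
      = (W 2 *ᵥ θ 2 + ε 2 ω) ⬝ᵥ ((1 - H₃) * (H₁ - H)) *ᵥ (W 0 *ᵥ θ 0 + ε 0 ω)
        + (W 2 *ᵥ θ 2 + ε 2 ω) ⬝ᵥ ((1 - H₃) * (H₂ - H)) *ᵥ (W 1 *ᵥ θ 1 + ε 1 ω) := by
    have hfit : H₁ *ᵥ y 0 ω + H₂ *ᵥ y 1 ω - H *ᵥ (y 0 ω + y 1 ω)
        = (H₁ - H) *ᵥ y 0 ω + (H₂ - H) *ᵥ y 1 ω := by
      rw [sub_mulVec, sub_mulVec, mulVec_add H]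
      abel
    have hres : y 2 ω - H₃ *ᵥ y 2 ω = (1 - H₃) *ᵥ y 2 ω := by rw [sub_mulVec, one_mulVec]
    rw [hres, hfit, hy, hy, hy,
      mulVec_mulVec_add_of_mul_eq_zero (one_sub_hatMat_mul_self (hXm 2)),
      mulVec_mulVec_add_of_mul_eq_zero (hatMat_sub_hatMat_fromCols_mul_left (hXm 0) hX),
      mulVec_mulVec_add_of_mul_eq_zero (hatMat_sub_hatMat_fromCols_mul_right (hXm 1) hX),
      (isSymm_one.sub (hatMat_isSymm _)).mulVec_dotProduct, mulVec_add, dotProduct_add,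
      mulVec_mulVec, mulVec_mulVec]
  have hL2_shift m i : MemLp (fun ω => (W m *ᵥ θ m + ε m ω) i) 2 P :=
    (memLp_const ((W m *ᵥ θ m) i)).add (hL2 m i)
  simp only [hR]
  rw [integral_add (integrable_dotProduct_mulVec (hL2_shift 2) (hL2_shift 0) _)
      (integrable_dotProduct_mulVec (hL2_shift 2) (hL2_shift 1) _),
    integral_add_dotProduct_mulVec_add (hL2 2) (hL2 0) (hmean 2) (hmean 0) (hcov 0 2),
    integral_add_dotProduct_mulVec_add (hL2 2) (hL2 1) (hmean 2) (hmean 1) (hcov 1 2)]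
  ring
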